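/- arXiv:2402.08239 — 8 statements merged into one kernel-verified Lean document; each statement's English description precedes it below -/
import Mathlib

section
/- For a function g : X_1 × ... × X_d → ℝ and nonempty J ⊆ D, the condition '{}_JΔ_{a_J}(g) = 0 for all a_J' holds if and only if g can be written as a finite sum g = Σ_{J' ⊂ J} g_{J' ∪ (D∖J)} where each summand g_{J' ∪ (D∖J)} depends only on the variables indexed by J' ∪ (D∖J) (i.e., on proper subsets J' of J together with the complement of J). -/
open Finset MeasureTheory

variable {ι : Type*} [DecidableEq ι] {X : ι → Type*}

/-- Substitute the values `a i` into the coordinates `i ∈ J` of the point `x`. -/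
def substPt (J : Finset ι) (a x : ∀ i, X i) : ∀ i, X i :=
  fun i => if i ∈ J then a i else x i

/-- The substitution operator `g ↦ g |_{x_J = a_J}`. -/
def substOp (J : Finset ι) (a : ∀ i, X i) (g : (∀ i, X i) → ℝ) : (∀ i, X i) → ℝ :=
  fun x => g (substPt J a x)

/-- The partial difference operator `ⱼΔ_{a_j} g = g - g|_{x_j = a_j}`. -/
def deltaOp (j : ι) (a : ∀ i, X i) (g : (∀ i, X i) → ℝ) : (∀ i, X i) → ℝ :=
  g - substOp {j} a g

/-- The composed partial difference operator `_JΔ_{a_J}`, in its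
inclusion-exclusion form `∑_{K ⊆ J} (-1)^|K| g|_{x_K = a_K}`. -/
def pdiff (J : Finset ι) (a : ∀ i, X i) (g : (∀ i, X i) → ℝ) : (∀ i, X i) → ℝ :=
  ∑ K ∈ J.powerset, ((-1 : ℝ) ^ K.card) • substOp K a g

/-- `∂g/∂x_J = 0` : all composed partial differences over `J` vanish. -/
def PDiffZero (J : Finset ι) (g : (∀ i, X i) → ℝ) : Prop :=
  ∀ a : ∀ i, X i, pdiff J a g = 0

/-- `g ∈ V_K` : `g` depends only on the coordinates in `K`. -/
def DependsOnVars (K : Finset ι) (g : (∀ i, X i) → ℝ) : Prop :=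
  ∀ x y : ∀ i, X i, (∀ i ∈ K, x i = y i) → g x = g y

lemma pdiff_apply (J : Finset ι) (a : ∀ i, X i) (g : (∀ i, X i) → ℝ) (x : ∀ i, X i) :
    pdiff J a g x = ∑ K ∈ J.powerset, ((-1 : ℝ) ^ K.card) * g (substPt K a x) := by
  simp [pdiff, substOp, Finset.sum_apply]

lemma pdiff_sum {α : Type*} (J : Finset ι) (a : ∀ i, X i) (s : Finset α)
    (G : α → (∀ i, X i) → ℝ) :
    pdiff J a (∑ k ∈ s, G k) = ∑ k ∈ s, pdiff J a (G k) := by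
  funext x
  simp only [Finset.sum_apply, pdiff_apply, Finset.mul_sum]
  exact Finset.sum_comm

lemma pdiff_zero_of_dependsOn (J : Finset ι) (a : ∀ i, X i) (f : (∀ i, X i) → ℝ)
    (S : Finset ι) (hf : DependsOnVars S f) (j : ι) (hjJ : j ∈ J) (hjS : j ∉ S) :
    pdiff J a f = 0 := by
  funext x
  have hj' : j ∉ J.erase j := Finset.notMem_erase j J
  have hJ : J = insert j (J.erase j) := (Finset.insert_erase hjJ).symm
  rw [pdiff_apply, hJ, Finset.sum_powerset_insert hj']
  rw [← Finset.sum_add_distrib]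
  apply Finset.sum_eq_zero
  intro K hK
  have hjK : j ∉ K := fun h => hj' (Finset.mem_powerset.mp hK h)
  have hval : f (substPt K a x) = f (substPt (insert j K) a x) := by
    apply hf
    intro i hi
    have hij : i ≠ j := fun h => hjS (h ▸ hi)
    simp [substPt, Finset.mem_insert, hij]
  rw [Finset.card_insert_of_notMem hjK, ← hval, pow_succ]
  ring


/-- for nonempty `J`, `∂g/∂x_J = 0` iff `g` is a finite sum of
functions each depending only on the variables in `J' ∪ (D ∖ J)` for some
proper subset `J' ⊂ J`. -/
theorem stmt2 [Fintype ι] (J : Finset ι) (hJ : J.Nonempty) (g : (∀ i, X i) → ℝ) :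
    PDiffZero J g ↔
      ∃ G : Finset ι → ((∀ i, X i) → ℝ),
        (∀ K ∈ J.powerset.erase J, DependsOnVars (K ∪ Jᶜ) (G K)) ∧
        g = ∑ K ∈ J.powerset.erase J, G K := by
  constructor
  · intro h
    by_cases hne : Nonempty (∀ i, X i)
    · obtain ⟨a⟩ := hne
      refine ⟨fun K => fun x => -(((-1 : ℝ) ^ (J \ K).card) * g (substPt (J \ K) a x)),
        ?_, ?_⟩
      · intro K hK x y hxy
        simp only [neg_inj, mul_eq_mul_left_iff]
        left
        have : substPt (J \ K) a x = substPt (J \ K) a y := by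
          funext i
          by_cases hi : i ∈ J \ K
          · simp [substPt, hi]
          · have hi' : i ∈ K ∪ Jᶜ := by
              by_cases hiJ : i ∈ J
              · refine Finset.mem_union_left _ ?_
                by_contra hiK
                exact hi (Finset.mem_sdiff.mpr ⟨hiJ, hiK⟩)
              · exact Finset.mem_union_right _ (Finset.mem_compl.mpr hiJ)
            simp [substPt, hi, hxy i hi']
        rw [this]
      · funext x
        have h0 : pdiff J a g x = 0 := by rw [h a]; rfl
        rw [pdiff_apply] at h0
        have hmem : (∅ : Finset ι) ∈ J.powerset := Finset.mem_powerset.mpr (Finset.empty_subset J)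
        rw [← Finset.add_sum_erase _ _ hmem] at h0
        simp only [Finset.card_empty, pow_zero, one_mul] at h0
        have hsx : substPt (∅ : Finset ι) a x = x := by
          funext i; simp [substPt]
        rw [hsx] at h0
        rw [Finset.sum_apply]
        have key : ∑ K ∈ J.powerset.erase J,
            -(((-1 : ℝ) ^ (J \ K).card) * g (substPt (J \ K) a x))
            = ∑ K ∈ J.powerset.erase ∅, -(((-1 : ℝ) ^ K.card) * g (substPt K a x)) := by
          refine Finset.sum_nbij' (i := fun K => J \ K) (j := fun K => J \ K)
            ?_ ?_ ?_ ?_ ?_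
          · intro K hK
            rw [Finset.mem_erase, Finset.mem_powerset] at hK ⊢
            refine ⟨?_, Finset.sdiff_subset⟩
            intro hc
            obtain ⟨j, hjJ, hjK⟩ := Finset.exists_of_ssubset
              (Finset.ssubset_iff_subset_ne.mpr ⟨hK.2, hK.1⟩)
            have : j ∈ J \ K := Finset.mem_sdiff.mpr ⟨hjJ, hjK⟩
            rw [show J \ K = ∅ from hc] at this
            exact absurd this (Finset.notMem_empty j)
          · intro K hK
            rw [Finset.mem_erase, Finset.mem_powerset] at hK ⊢
            refine ⟨?_, Finset.sdiff_subset⟩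
            intro hc
            obtain ⟨j, hjK⟩ := Finset.nonempty_iff_ne_empty.mpr hK.1
            have hjJ : j ∈ J := hK.2 hjK
            rw [← show J \ K = J from hc] at hjJ
            exact (Finset.mem_sdiff.mp hjJ).2 hjK
          · intro K hK
            have hKJ : K ⊆ J := Finset.mem_powerset.mp (Finset.mem_of_mem_erase hK)
            simp [Finset.sdiff_sdiff_self_left, Finset.inter_eq_right.mpr hKJ]
          · intro K hK
            have hKJ : K ⊆ J := Finset.mem_powerset.mp (Finset.mem_of_mem_erase hK)
            simp [Finset.sdiff_sdiff_self_left, Finset.inter_eq_right.mpr hKJ]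
          · intro K _
            rfl
        rw [key, Finset.sum_neg_distrib]
        linarith
    · refine ⟨fun _ => 0, ?_, ?_⟩
      · intro K _ x y _
        exact (hne ⟨x⟩).elim
      · funext x
        exact (hne ⟨x⟩).elim
  · rintro ⟨G, hdep, rfl⟩
    intro a
    rw [pdiff_sum]
    apply Finset.sum_eq_zero
    intro K hK
    rw [Finset.mem_erase, Finset.mem_powerset] at hK
    obtain ⟨j, hjJ, hjK⟩ := Finset.exists_of_ssubset
      (Finset.ssubset_iff_subset_ne.mpr ⟨hK.2, hK.1⟩)
    refine pdiff_zero_of_dependsOn J a _ _ (hdep K (by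
      rw [Finset.mem_erase, Finset.mem_powerset]; exact ⟨hK.1, hK.2⟩)) j hjJ ?_
    simp [Finset.mem_union, hjK, hjJ]
end

section
/- In particular, if g depends only on the variables indexed by J (g ∈ V_J) and ∂g/∂x_J = 0 (i.e., {}_JΔ_{a_J}(g) = 0 for all a_J), then g decomposes as a sum g = Σ_{J' ⊂ J} g_{J'} with each g_{J'} depending only on variables indexed by the proper subset J' of J. -/
open Finset MeasureTheory

variable {ι : Type*} [DecidableEq ι] {X : ι → Type*}

/-- `g ∈ V_K` : `g` depends only on the coordinates in `K`. -/
def DependsOnCoords (K : Finset ι) (g : (∀ i, X i) → ℝ) : Prop :=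
  ∀ x y : ∀ i, X i, (∀ i ∈ K, x i = y i) → g x = g y

/-- if `g ∈ V_J` and `∂g/∂x_J = 0`, then `g = ∑_{J' ⊂ J} g_{J'}`
with each `g_{J'}` depending only on the coordinates in the proper subset `J'`. -/
theorem stmt3 (J : Finset ι) (g : (∀ i, X i) → ℝ)
    (hg : DependsOnCoords J g) (h0 : PDiffZero J g) :
    ∃ G : Finset ι → ((∀ i, X i) → ℝ),
      (∀ K ∈ J.powerset.erase J, DependsOnCoords K (G K)) ∧
      g = ∑ K ∈ J.powerset.erase J, G K := by

  by_cases hne : Nonempty (∀ i, X i)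
  · obtain ⟨a⟩ := hne
    refine ⟨fun K' => (-(-1:ℝ)^(J \ K').card) • substOp (J \ K') a g, ?_, ?_⟩
    · intro K hK x y hxy
      simp only [mem_erase, mem_powerset] at hK
      simp only [Pi.smul_apply, smul_eq_mul]
      congr 1
      apply hg
      intro i hi
      simp only [substPt]
      by_cases h : i ∈ J \ K
      · simp [h]
      · have hiK : i ∈ K := by
          by_contra hc
          exact h (Finset.mem_sdiff.mpr ⟨hi, hc⟩)
        simp [h, hxy i hiK]
    · have key := h0 a
      have hsplit : g + ∑ K ∈ J.powerset.erase ∅, ((-1:ℝ)^K.card) • substOp K a g = 0 := by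
        rw [pdiff] at key
        rw [← Finset.add_sum_erase _ _ (Finset.empty_mem_powerset J)] at key
        have he : ((-1:ℝ)^(∅ : Finset ι).card) • substOp ∅ a g = g := by
          funext x
          have hx : substPt (∅ : Finset ι) a x = x := by
            funext i; simp [substPt]
          simp [substOp, hx]
        rw [he] at key
        exact key
      have hre : ∑ K ∈ J.powerset.erase J, ((-(-1:ℝ)^(J \ K).card) • substOp (J \ K) a g)
          = ∑ K ∈ J.powerset.erase ∅, ((-(-1:ℝ)^K.card) • substOp K a g) := by
        refine Finset.sum_nbij' (fun K => J \ K) (fun K => J \ K) ?_ ?_ ?_ ?_ ?_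
        · intro K hK
          simp only [mem_erase, mem_powerset] at hK ⊢
          constructor
          · intro hempty
            exact hK.1 (by
              have := Finset.sdiff_eq_empty_iff_subset.mp hempty
              exact Finset.Subset.antisymm hK.2 this)
          · exact Finset.sdiff_subset
        · intro K hK
          simp only [mem_erase, mem_powerset] at hK ⊢
          refine ⟨?_, Finset.sdiff_subset⟩
          intro hJK
          obtain ⟨i, hi⟩ := Finset.nonempty_of_ne_empty hK.1
          have hiJ : i ∈ J := hK.2 hi
          rw [← hJK] at hiJ
          exact (Finset.mem_sdiff.mp hiJ).2 hi
        · intro K hK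
          simp only [mem_erase, mem_powerset] at hK
          exact Finset.sdiff_sdiff_eq_self hK.2
        · intro K hK
          simp only [mem_erase, mem_powerset] at hK
          exact Finset.sdiff_sdiff_eq_self hK.2
        · intro K hK; rfl
      rw [hre]
      have : ∑ K ∈ J.powerset.erase ∅, ((-(-1:ℝ)^K.card) • substOp K a g)
          = -∑ K ∈ J.powerset.erase ∅, ((-1:ℝ)^K.card) • substOp K a g := by
        rw [← Finset.sum_neg_distrib]
        congr 1; funext K
        rw [neg_smul]
      rw [this]
      exact eq_neg_of_add_eq_zero_left hsplit
  · refine ⟨fun _ => 0, fun K _ x y _ => rfl, ?_⟩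
    funext x
    exact absurd ⟨x⟩ hne
end

section
/- (Key Lemma) Fix nonempty J ⊆ D. Suppose that for every proper subset J' ⊂ J the operators H_{J'} satisfy: (a) if ∂g/∂x_{J'} = 0 then H_{J'}(g) = 0, and (b) if g ∈ V_{J'} then (Σ_{J''⊆J'} H_{J''})(g) = g. Then for any h ∈ V_J with ∂h/∂x_J = 0, one has (Σ_{J'⊂J} H_{J'})(h) = h. -/
open Finset MeasureTheory

variable {ι : Type*} [DecidableEq ι] {X : ι → Type*}

lemma substPt_insert (j : ι) (K : Finset ι) (a x : ∀ i, X i) :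
    substPt (insert j K) a x = substPt {j} a (substPt K a x) := by
  funext i
  simp only [substPt, Finset.mem_insert, Finset.mem_singleton]
  by_cases h1 : i = j <;> by_cases h2 : i ∈ K <;> simp [h1, h2]

lemma pdiffZero_of_invariant (J'' : Finset ι) (j : ι) (hj : j ∈ J'')
    (g : (∀ i, X i) → ℝ) (hg : ∀ a y, g (substPt {j} a y) = g y) :
    PDiffZero J'' g := by
  intro a
  unfold pdiff
  rw [← Finset.insert_erase hj,
    Finset.sum_powerset_insert (Finset.notMem_erase j J'')]
  have hterm : ∀ K ∈ (J''.erase j).powerset,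
      ((-1:ℝ)^(insert j K).card) • substOp (insert j K) a g
        = -(((-1:ℝ)^K.card) • substOp K a g) := by
    intro K hK
    have hjK : j ∉ K := fun h => Finset.notMem_erase j J'' (Finset.mem_powerset.mp hK h)
    have h1 : substOp (insert j K) a g = substOp K a g := by
      funext x
      simp only [substOp]
      rw [substPt_insert, hg]
    rw [h1, Finset.card_insert_of_notMem hjK, pow_succ, mul_comm, neg_one_mul,
      neg_smul]
  rw [Finset.sum_congr rfl hterm, Finset.sum_neg_distrib]
  exact add_neg_cancel _

/-- Key Lemma: if for every proper subset `J' ⊂ J` the operator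
`H_{J'}` satisfies (P2) and (P3), then every `h ∈ V_J` with `∂h/∂x_J = 0`
satisfies `(∑_{J' ⊂ J} H_{J'})(h) = h`. -/
theorem stmt6
    (H : Finset ι → ((∀ i, X i) → ℝ) →ₗ[ℝ] ((∀ i, X i) → ℝ))
    (hV : ∀ (J : Finset ι) (g : (∀ i, X i) → ℝ), DependsOnCoords J (H J g))
    (J : Finset ι) (hJ : J.Nonempty)
    (ha : ∀ J' ∈ J.powerset.erase J, ∀ g : (∀ i, X i) → ℝ, PDiffZero J' g → H J' g = 0)
    (hb : ∀ J' ∈ J.powerset.erase J, ∀ g : (∀ i, X i) → ℝ, DependsOnCoords J' g →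
      ∑ J'' ∈ J'.powerset, H J'' g = g) :
    ∀ h : (∀ i, X i) → ℝ, DependsOnCoords J h → PDiffZero J h →
      ∑ J' ∈ J.powerset.erase J, H J' h = h := by
  intro h hdep hpz
  -- Lemma C : for any proper subset L of J and g depending only on L,
  -- the full sum of the H J' over proper subsets reproduces g.
  have lemC : ∀ L ∈ J.powerset.erase J, ∀ g : (∀ i, X i) → ℝ, DependsOnCoords L g →
      ∑ J' ∈ J.powerset.erase J, H J' g = g := by
    intro L hL g hg
    have hLJ : L ⊆ J := Finset.mem_powerset.mp (Finset.mem_of_mem_erase hL)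
    have hLne : L ≠ J := (Finset.mem_erase.mp hL).1
    have hsub : L.powerset ⊆ J.powerset.erase J := by
      intro K hK
      rw [Finset.mem_erase]
      refine ⟨?_, Finset.mem_powerset.mpr ((Finset.mem_powerset.mp hK).trans hLJ)⟩
      rintro rfl
      exact hLne (Finset.Subset.antisymm hLJ (Finset.mem_powerset.mp hK))
    rw [← Finset.sum_subset hsub ?_]
    · exact hb L hL g hg
    · intro J' hJ' hJ'L
      have hns : ¬ J' ⊆ L := fun hc => hJ'L (Finset.mem_powerset.mpr hc)
      obtain ⟨j, hjJ', hjL⟩ := Finset.not_subset.mp hns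
      apply ha J' hJ'
      apply pdiffZero_of_invariant J' j hjJ'
      intro a y
      apply hg
      intro i hi
      simp only [substPt, Finset.mem_singleton]
      rw [if_neg]
      rintro rfl
      exact hjL hi
  funext x
  -- express h as a combination of substituted copies, using PDiffZero at a = x
  have hx : h = ∑ K ∈ J.powerset.erase ∅, (-(-1:ℝ)^K.card) • substOp K x h := by
    have h0 := hpz x
    unfold pdiff at h0
    rw [← Finset.insert_erase (Finset.empty_mem_powerset J),
      Finset.sum_insert (Finset.notMem_erase _ _)] at h0
    have he : ((-1:ℝ)^(∅:Finset ι).card) • substOp ∅ x h = h := by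
      funext y
      simp only [substOp, Finset.card_empty, pow_zero, one_smul]
      congr 1
    rw [he] at h0
    calc h = -(∑ K ∈ J.powerset.erase ∅, ((-1:ℝ)^K.card) • substOp K x h) :=
          eq_neg_of_add_eq_zero_left h0
      _ = ∑ K ∈ J.powerset.erase ∅, (-(-1:ℝ)^K.card) • substOp K x h := by
          rw [← Finset.sum_neg_distrib]
          exact Finset.sum_congr rfl fun K _ => (neg_smul _ _).symm
  -- the key reproduction property for each nonempty K ⊆ J
  have key : ∀ K ∈ J.powerset.erase ∅, ∑ J' ∈ J.powerset.erase J, H J' (substOp K x h) = substOp K x h := by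
    intro K hK
    have hKne : K ≠ ∅ := (Finset.mem_erase.mp hK).1
    have hKJ : K ⊆ J := Finset.mem_powerset.mp (Finset.mem_of_mem_erase hK)
    have hdepL : DependsOnCoords (J \ K) (substOp K x h) := by
      intro y z hyz
      simp only [substOp]
      apply hdep
      intro i hi
      by_cases hiK : i ∈ K
      · simp [substPt, hiK]
      · simp only [substPt, hiK, if_false]
        exact hyz i (Finset.mem_sdiff.mpr ⟨hi, hiK⟩)
    have hmem : J \ K ∈ J.powerset.erase J := by
      rw [Finset.mem_erase]
      refine ⟨?_, Finset.mem_powerset.mpr (Finset.sdiff_subset)⟩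
      intro hcon
      obtain ⟨k, hk⟩ := Finset.nonempty_iff_ne_empty.mpr hKne
      have hk2 : k ∈ J \ K := by rw [hcon]; exact hKJ hk
      exact (Finset.mem_sdiff.mp hk2).2 hk
    exact lemC (J \ K) hmem _ hdepL
  -- now compute
  have step : ∑ J' ∈ J.powerset.erase J, H J' h
      = ∑ K ∈ J.powerset.erase ∅, (-(-1:ℝ)^K.card) • substOp K x h := by
    conv_lhs => rw [hx]
    simp only [map_sum, _root_.map_smul]
    rw [Finset.sum_comm]
    refine Finset.sum_congr rfl fun K hK => ?_
    rw [← Finset.smul_sum, key K hK]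
  rw [step]
  have hsx : ∀ K ∈ J.powerset.erase ∅, substOp K x h x = h x := by
    intro K _
    simp only [substOp]
    congr 1
    funext i
    simp [substPt]
  rw [Finset.sum_apply]
  simp only [Pi.smul_apply, smul_eq_mul]
  rw [Finset.sum_congr rfl fun K hK => by rw [hsx K hK]]
  rw [← Finset.sum_mul]
  have hcoef : (∑ K ∈ J.powerset.erase ∅, (-(-1:ℝ)^K.card)) = 1 := by
    have h1 : (∑ K ∈ J.powerset, ((-1:ℝ)^K.card)) = 0 := by
      have := Finset.sum_powerset_neg_one_pow_card_of_nonempty (x := J) hJ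
      have h2 : ((∑ m ∈ J.powerset, (-1 : ℤ) ^ m.card : ℤ) : ℝ)
          = ∑ K ∈ J.powerset, ((-1:ℝ)^K.card) := by
        push_cast
        rfl
      rw [this] at h2
      simpa using h2.symm
    rw [← Finset.insert_erase (Finset.empty_mem_powerset J),
      Finset.sum_insert (Finset.notMem_erase _ _)] at h1
    simp only [Finset.card_empty, pow_zero] at h1
    rw [Finset.sum_neg_distrib]
    linarith [h1]
  rw [hcoef, one_mul]
end

section
/- With H_J defined recursively by H_∅ := E and H_J := (I − Σ_{J'⊂J} H_{J'}) ∘ L_J: if the family {L_J} satisfies (P2)*: ∂g/∂x_J = 0 ⇒ ∂(L_J(g))/∂x_J = 0, and (P3)*: g ∈ V_J ⇒ ∂(L_J(g) − g)/∂x_J = 0, then {H_J} satisfies Relevance (P2): ∂g/∂x_J = 0 ⇒ H_J(g) = 0, and Lean Decomposability (P3): g ∈ V_J ⇒ (Σ_{J'⊆J} H_{J'})(g) = g, for all J ⊆ D. -/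
open Finset MeasureTheory

variable {ι : Type*} [DecidableEq ι] {X : ι → Type*}

lemma substPt_comp (J K : Finset ι) (a x : ∀ i, X i) :
    substPt J a (substPt K a x) = substPt (J ∪ K) a x := by
  funext i
  simp only [substPt, Finset.mem_union]
  by_cases hJ : i ∈ J <;> by_cases hK : i ∈ K <;> simp [hJ, hK]

lemma substOp_comp (J K : Finset ι) (a : ∀ i, X i) (g : (∀ i, X i) → ℝ) :
    substOp J a (substOp K a g) = substOp (K ∪ J) a g := by
  funext x
  simp only [substOp, substPt_comp]

lemma substOp_singleton_insert (j : ι) (K : Finset ι) (a : ∀ i, X i) (g : (∀ i, X i) → ℝ) :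
    substOp K a (substOp {j} a g) = substOp (insert j K) a g := by
  rw [substOp_comp, ← Finset.insert_eq]

lemma substOp_fix (j : ι) (K : Finset ι) (hj : j ∈ K) (a b : ∀ i, X i) (g : (∀ i, X i) → ℝ) :
    substOp {j} b (substOp K a g) = substOp K a g := by
  funext x
  simp only [substOp]
  congr 1
  funext i
  simp only [substPt, Finset.mem_singleton]
  by_cases hiK : i ∈ K
  · simp [hiK]
  · have hij : ¬ i = j := fun h => hiK (h ▸ hj)
    simp [hiK, hij]

lemma substOp_empty (a : ∀ i, X i) (g : (∀ i, X i) → ℝ) :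
    substOp (∅ : Finset ι) a g = g := by
  funext x
  show g (substPt ∅ a x) = g x
  congr 1

lemma pdiffZero_of_fix (J : Finset ι) (j : ι) (hj : j ∈ J)
    (g : (∀ i, X i) → ℝ) (hg : ∀ b, substOp {j} b g = g) : PDiffZero J g := by
  intro a
  unfold pdiff
  have hJ : J = insert j (J.erase j) := (Finset.insert_erase hj).symm
  rw [hJ, Finset.sum_powerset_insert (Finset.notMem_erase j J), ← Finset.sum_add_distrib]
  apply Finset.sum_eq_zero
  intro K hK
  have hjK : j ∉ K := fun h => Finset.notMem_erase j J (Finset.mem_powerset.mp hK h)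
  rw [← substOp_singleton_insert, hg a, Finset.card_insert_of_notMem hjK, pow_succ,
    mul_neg_one, neg_smul, add_neg_cancel]

lemma decomp (J : Finset ι) (a : ∀ i, X i) (h : (∀ i, X i) → ℝ) (hpd : PDiffZero J h) :
    h = ∑ K ∈ J.powerset.erase ∅, (-(-1 : ℝ) ^ K.card) • substOp K a h := by
  have h0 := hpd a
  unfold pdiff at h0
  rw [← Finset.add_sum_erase _ _ (Finset.empty_mem_powerset J)] at h0
  rw [Finset.card_empty, pow_zero, one_smul, substOp_empty] at h0
  have heq := eq_neg_of_add_eq_zero_left h0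
  have hneg : ∑ K ∈ J.powerset.erase ∅, (-(-1 : ℝ) ^ K.card) • substOp K a h
      = -∑ K ∈ J.powerset.erase ∅, ((-1 : ℝ) ^ K.card) • substOp K a h := by
    rw [← Finset.sum_neg_distrib]
    exact Finset.sum_congr rfl fun K _ => neg_smul _ _
  rw [hneg]
  exact heq

lemma dependsOn_substOp {J : Finset ι} (K : Finset ι) (hK : K ⊆ J) (a : ∀ i, X i)
    {h : (∀ i, X i) → ℝ} (hdep : DependsOnCoords J h) : DependsOnCoords (J \ K) (substOp K a h) := by
  intro x y hxy
  apply hdep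
  intro i hi
  simp only [substPt]
  by_cases hiK : i ∈ K
  · simp [hiK]
  · simpa [hiK] using hxy i (Finset.mem_sdiff.mpr ⟨hi, hiK⟩)

lemma dependsOn_sub {J : Finset ι} {f g : (∀ i, X i) → ℝ}
    (hf : DependsOnCoords J f) (hg : DependsOnCoords J g) : DependsOnCoords J (f - g) := by
  intro x y h
  simp only [Pi.sub_apply, hf x y h, hg x y h]

/-- if `{L_J}` satisfies (P2)* and (P3)*, then the recursively
defined `{H_J}` satisfies Relevance (P2) and Lean Decomposability (P3). -/
theorem stmt8
    (E : ((∀ i, X i) → ℝ) →ₗ[ℝ] ((∀ i, X i) → ℝ))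
    (hEconst : ∀ g : (∀ i, X i) → ℝ, DependsOnCoords (∅ : Finset ι) (E g))
    (hEfix : ∀ c : ℝ, E (fun _ => c) = fun _ => c)
    (L : Finset ι → ((∀ i, X i) → ℝ) →ₗ[ℝ] ((∀ i, X i) → ℝ))
    (hL : ∀ J : Finset ι, J.Nonempty → ∀ g : (∀ i, X i) → ℝ, DependsOnCoords J (L J g))
    (H : Finset ι → ((∀ i, X i) → ℝ) →ₗ[ℝ] ((∀ i, X i) → ℝ))
    (hH0 : H ∅ = E)
    (hHrec : ∀ J : Finset ι, J.Nonempty → ∀ g : (∀ i, X i) → ℝ,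
      H J g = L J g - ∑ J' ∈ J.powerset.erase J, H J' (L J g))
    (hP2s : ∀ J : Finset ι, J.Nonempty → ∀ g : (∀ i, X i) → ℝ,
      PDiffZero J g → PDiffZero J (L J g))
    (hP3s : ∀ J : Finset ι, J.Nonempty → ∀ g : (∀ i, X i) → ℝ,
      DependsOnCoords J g → PDiffZero J (L J g - g)) :
    (∀ (J : Finset ι) (g : (∀ i, X i) → ℝ), PDiffZero J g → H J g = 0) ∧
    (∀ (J : Finset ι) (g : (∀ i, X i) → ℝ), DependsOnCoords J g →
      ∑ J' ∈ J.powerset, H J' g = g) := by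
  suffices hP : ∀ J : Finset ι,
      (∀ g, PDiffZero J g → H J g = 0) ∧
      (∀ g, DependsOnCoords J g → ∑ J' ∈ J.powerset, H J' g = g) by
    exact ⟨fun J => (hP J).1, fun J => (hP J).2⟩
  intro J
  induction J using Finset.strongInduction with
  | _ J IH =>
  rcases eq_or_ne J ∅ with rfl | hJne
  · constructor
    · intro g hg
      have hg0 : g = 0 := by
        funext x
        have h1 := congrFun (hg x) x
        simpa [pdiff, Finset.powerset_empty, substOp_empty] using h1
      rw [hg0, map_zero]
    · intro g hg
      rw [Finset.powerset_empty, Finset.sum_singleton, hH0]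
      funext x
      have hgc : g = fun _ => g x := by
        funext y
        exact hg y x (by simp)
      conv_lhs => rw [hgc]
      rw [hEfix]
  · have hJnonempty : J.Nonempty := Finset.nonempty_iff_ne_empty.mpr hJne
    have key : ∀ h : (∀ i, X i) → ℝ, DependsOnCoords J h → PDiffZero J h →
        ∑ J' ∈ J.powerset.erase J, H J' h = h := by
      intro h hdep hpd
      by_cases hne : Nonempty (∀ i, X i)
      · obtain ⟨a⟩ := hne
        have hrep := decomp J a h hpd
        have main : ∀ K ∈ J.powerset.erase ∅,
            ∑ J' ∈ J.powerset.erase J, H J' (substOp K a h) = substOp K a h := by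
          intro K hK
          obtain ⟨hKne, hKJ'⟩ := Finset.mem_erase.mp hK
          have hKJ : K ⊆ J := Finset.mem_powerset.mp hKJ'
          have hKnonempty : K.Nonempty := Finset.nonempty_iff_ne_empty.mpr hKne
          have hproper : J \ K ⊂ J := Finset.sdiff_ssubset hKJ hKnonempty
          have hsub : (J \ K).powerset ⊆ J.powerset.erase J := by
            intro M hM
            have hMsub : M ⊆ J \ K := Finset.mem_powerset.mp hM
            rw [Finset.mem_erase]
            refine ⟨?_, Finset.mem_powerset.mpr (hMsub.trans (Finset.sdiff_subset))⟩
            rintro rfl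
            obtain ⟨k, hk⟩ := hKnonempty
            exact (Finset.mem_sdiff.mp (hMsub (hKJ hk))).2 hk
          have hdec := (IH (J \ K) hproper).2 (substOp K a h) (dependsOn_substOp K hKJ a hdep)
          rw [← Finset.sum_subset hsub ?_]
          · exact hdec
          · intro J' hJ'mem hnot
            have hJ'J : J' ⊂ J := by
              obtain ⟨h1, h2⟩ := Finset.mem_erase.mp hJ'mem
              exact lt_of_le_of_ne (Finset.mem_powerset.mp h2) h1
            obtain ⟨j, hjJ', hjnot⟩ :=
              Finset.not_subset.mp (fun hs => hnot (Finset.mem_powerset.mpr hs))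
            have hjK : j ∈ K := by
              by_contra hjK
              exact hjnot (Finset.mem_sdiff.mpr ⟨hJ'J.subset hjJ', hjK⟩)
            exact (IH J' hJ'J).1 _
              (pdiffZero_of_fix J' j hjJ' _ (fun b => substOp_fix j K hjK a b h))
        calc ∑ J' ∈ J.powerset.erase J, H J' h
            = ∑ J' ∈ J.powerset.erase J,
                H J' (∑ K ∈ J.powerset.erase ∅, (-(-1:ℝ)^K.card) • substOp K a h) := by
              rw [← hrep]
          _ = ∑ J' ∈ J.powerset.erase J, ∑ K ∈ J.powerset.erase ∅,
                (-(-1:ℝ)^K.card) • H J' (substOp K a h) := by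
              simp only [map_sum, _root_.map_smul]
          _ = ∑ K ∈ J.powerset.erase ∅,
                (-(-1:ℝ)^K.card) • ∑ J' ∈ J.powerset.erase J, H J' (substOp K a h) := by
              rw [Finset.sum_comm]
              simp only [Finset.smul_sum]
          _ = ∑ K ∈ J.powerset.erase ∅, (-(-1:ℝ)^K.card) • substOp K a h := by
              exact Finset.sum_congr rfl (fun K hK => by rw [main K hK])
          _ = h := hrep.symm
      · have h0 : h = 0 := funext fun x => absurd ⟨x⟩ hne
        subst h0
        simp
    constructor
    · intro g hg
      rw [hHrec J hJnonempty g,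
        key (L J g) (hL J hJnonempty g) (hP2s J hJnonempty g hg), sub_self]
    · intro g hg
      have hdf : DependsOnCoords J (L J g) := hL J hJnonempty g
      have hk := key (L J g - g) (dependsOn_sub hdf hg) (hP3s J hJnonempty g hg)
      have hsplit : ∑ J' ∈ J.powerset.erase J, H J' (L J g - g)
          = (∑ J' ∈ J.powerset.erase J, H J' (L J g))
            - ∑ J' ∈ J.powerset.erase J, H J' g := by
        rw [← Finset.sum_sub_distrib]
        exact Finset.sum_congr rfl (fun J' _ => map_sub _ _ _)
      rw [hsplit] at hk
      rw [← Finset.add_sum_erase _ _ (Finset.mem_powerset_self J), hHrec J hJnonempty g,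
        sub_add, hk, sub_sub_cancel]
end

section
/- With H_J defined recursively from {L_J} via H_∅ := E, H_J := (I − Σ_{J'⊂J} H_{J'}) ∘ L_J: if {H_J} satisfies Relevance (P2) and Lean Decomposability (P3), then it satisfies Idempotence (P4): H_J ∘ H_J = H_J, and Operational Orthogonality (P5): H_{J'} ∘ H_J = 0 for J' ≠ J. -/
open Finset MeasureTheory

variable {ι : Type*} [DecidableEq ι] {X : ι → Type*}

private lemma dependsOn_of_rec
    (E : ((∀ i, X i) → ℝ) →ₗ[ℝ] ((∀ i, X i) → ℝ))
    (hEconst : ∀ g : (∀ i, X i) → ℝ, DependsOnCoords (∅ : Finset ι) (E g))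
    (L : Finset ι → ((∀ i, X i) → ℝ) →ₗ[ℝ] ((∀ i, X i) → ℝ))
    (hL : ∀ J : Finset ι, J.Nonempty → ∀ g : (∀ i, X i) → ℝ, DependsOnCoords J (L J g))
    (H : Finset ι → ((∀ i, X i) → ℝ) →ₗ[ℝ] ((∀ i, X i) → ℝ))
    (hH0 : H ∅ = E)
    (hHrec : ∀ J : Finset ι, J.Nonempty → ∀ g : (∀ i, X i) → ℝ,
      H J g = L J g - ∑ J' ∈ J.powerset.erase J, H J' (L J g)) :
    ∀ (J : Finset ι) (g : (∀ i, X i) → ℝ), DependsOnCoords J (H J g) := by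
  intro J
  induction J using Finset.strongInduction with
  | _ J ih =>
    intro g
    rcases J.eq_empty_or_nonempty with rfl | hJ
    · rw [hH0]; exact hEconst g
    · rw [hHrec J hJ g]
      intro x y hxy
      simp only [Pi.sub_apply, Finset.sum_apply]
      have h1 : L J g x = L J g y := hL J hJ g x y hxy
      rw [h1]
      congr 1
      refine Finset.sum_congr rfl fun J' hJ' => ?_
      rw [Finset.mem_erase, Finset.mem_powerset] at hJ'
      have hss : J' ⊂ J := hJ'.2.ssubset_of_ne hJ'.1
      exact ih J' hss (L J g) x y fun i hi => hxy i (hss.subset hi)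

/-- if the recursively defined `{H_J}` satisfies (P2) and (P3),
then it satisfies Idempotence (P4) and Operational Orthogonality (P5). -/
theorem stmt11
    (E : ((∀ i, X i) → ℝ) →ₗ[ℝ] ((∀ i, X i) → ℝ))
    (hEconst : ∀ g : (∀ i, X i) → ℝ, DependsOnCoords (∅ : Finset ι) (E g))
    (hEfix : ∀ c : ℝ, E (fun _ => c) = fun _ => c)
    (L : Finset ι → ((∀ i, X i) → ℝ) →ₗ[ℝ] ((∀ i, X i) → ℝ))
    (hL : ∀ J : Finset ι, J.Nonempty → ∀ g : (∀ i, X i) → ℝ, DependsOnCoords J (L J g))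
    (H : Finset ι → ((∀ i, X i) → ℝ) →ₗ[ℝ] ((∀ i, X i) → ℝ))
    (hH0 : H ∅ = E)
    (hHrec : ∀ J : Finset ι, J.Nonempty → ∀ g : (∀ i, X i) → ℝ,
      H J g = L J g - ∑ J' ∈ J.powerset.erase J, H J' (L J g))
    (hP2 : ∀ (J : Finset ι) (g : (∀ i, X i) → ℝ), PDiffZero J g → H J g = 0)
    (hP3 : ∀ (J : Finset ι) (g : (∀ i, X i) → ℝ), DependsOnCoords J g →
      ∑ J' ∈ J.powerset, H J' g = g) :
    (∀ (J : Finset ι) (g : (∀ i, X i) → ℝ), H J (H J g) = H J g) ∧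
    (∀ (J' J : Finset ι), J' ≠ J → ∀ g : (∀ i, X i) → ℝ, H J' (H J g) = 0) := by
  have Hdep := dependsOn_of_rec E hEconst L hL H hH0 hHrec
  -- Lemma A : if J' is not a subset of J, then H J' ∘ H J = 0
  have lemA : ∀ J' J : Finset ι, ¬ (J' ⊆ J) → ∀ g, H J' (H J g) = 0 := by
    intro J' J hns g
    obtain ⟨j, hjJ', hjJ⟩ : ∃ j, j ∈ J' ∧ j ∉ J := by
      by_contra h
      push_neg at h
      exact hns fun i hi => h i hi
    apply hP2
    intro a
    set h : (∀ i, X i) → ℝ := H J g with hh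
    have hdep : DependsOnCoords J h := Hdep J g
    have hJ'eq : J' = insert j (J'.erase j) := (Finset.insert_erase hjJ').symm
    unfold pdiff
    rw [hJ'eq, Finset.sum_powerset_insert (Finset.notMem_erase j J')]
    rw [← Finset.sum_add_distrib]
    apply Finset.sum_eq_zero
    intro K hK
    rw [Finset.mem_powerset] at hK
    have hjK : j ∉ K := fun hc => Finset.notMem_erase j J' (hK hc)
    have hcard : (insert j K).card = K.card + 1 := Finset.card_insert_of_notMem hjK
    have hsubst : substOp (insert j K) a h = substOp K a h := by
      funext x
      apply hdep
      intro i hi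
      have hij : i ≠ j := fun hc => hjJ (hc ▸ hi)
      simp [substPt, Finset.mem_insert, hij]
    rw [hsubst, hcard, pow_succ, mul_neg_one, neg_smul, add_neg_cancel]
  -- combined statement (Lemma B), by strong induction
  have B : ∀ J : Finset ι,
      (∀ g, ∀ J' ⊂ J, H J' (H J g) = 0) ∧ (∀ g, H J (H J g) = H J g) := by
    intro J
    induction J using Finset.strongInduction with
    | _ J ih =>
      have first : ∀ g, ∀ J' ⊂ J, H J' (H J g) = 0 := by
        intro g J' hJ'
        have hJne : J.Nonempty := by
          rcases J.eq_empty_or_nonempty with rfl | hne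
          · exact absurd (Finset.subset_empty.mp hJ'.subset) hJ'.ne
          · exact hne
        rw [hHrec J hJne g, map_sub, map_sum]
        have hsum : ∑ J'' ∈ J.powerset.erase J, H J' (H J'' (L J g)) = H J' (L J g) := by
          rw [Finset.sum_eq_single J']
          · exact (ih J' hJ').2 (L J g)
          · intro J'' hmem hne
            rw [Finset.mem_erase, Finset.mem_powerset] at hmem
            have hJ''ss : J'' ⊂ J := hmem.2.ssubset_of_ne hmem.1
            by_cases hsub : J' ⊆ J''
            · exact (ih J'' hJ''ss).1 (L J g) J' (hsub.ssubset_of_ne (Ne.symm hne))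
            · exact lemA J' J'' hsub (L J g)
          · intro habs
            exact absurd (Finset.mem_erase_of_ne_of_mem hJ'.ne
              (Finset.mem_powerset.mpr hJ'.subset)) habs
        rw [hsum, sub_self]
      refine ⟨first, fun g => ?_⟩
      have hdep : DependsOnCoords J (H J g) := Hdep J g
      have h3 := hP3 J (H J g) hdep
      rw [← Finset.add_sum_erase _ _ (Finset.mem_powerset_self J)] at h3
      have hz : ∑ J' ∈ J.powerset.erase J, H J' (H J g) = 0 := by
        apply Finset.sum_eq_zero
        intro J' hJ'
        rw [Finset.mem_erase, Finset.mem_powerset] at hJ'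
        exact first g J' (hJ'.2.ssubset_of_ne hJ'.1)
      rw [hz, add_zero] at h3
      exact h3
  refine ⟨fun J g => (B J).2 g, fun J' J hne g => ?_⟩
  by_cases hsub : J' ⊆ J
  · exact (B J).1 g J' (hsub.ssubset_of_ne hne)
  · exact lemA J' J hsub g
end

section
/- Additive recovery: if {H_J}_{J⊆D} are linear operators satisfying (P1) (H_∅ = E, E∘H_J = 0 for J≠∅), (P2) (Relevance) and (P3) (Lean Decomposability), then for an additive function f(x_D) = Σ_{j=1}^d g_j(x_j), the first-order terms recover the centered summands: H_j(f)(x_j) = g_j(x_j) − E[g_j(X_j)] for each j, and H_J(f) = 0 for all J with |J| ≥ 2. -/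
open Finset MeasureTheory

variable {ι : Type*} [DecidableEq ι] {X : ι → Type*}

lemma substOp_insert_of_not_mem {L : Finset ι} {g : (∀ i, X i) → ℝ}
    (hg : DependsOnCoords L g) {j : ι} (hj : j ∉ L)
    (K : Finset ι) (a : ∀ i, X i) : substOp (insert j K) a g = substOp K a g := by
  funext x
  refine hg _ _ (fun i hi => ?_)
  have hij : i ≠ j := fun h => hj (h ▸ hi)
  simp [substPt, Finset.mem_insert, hij]

lemma pdiffZero_of_indep {L J : Finset ι} {g : (∀ i, X i) → ℝ}
    (hg : DependsOnCoords L g) {j : ι} (hjJ : j ∈ J) (hjL : j ∉ L) : PDiffZero J g := by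
  intro a
  have hJ : J = insert j (J.erase j) := (Finset.insert_erase hjJ).symm
  rw [pdiff, hJ, Finset.sum_powerset_insert (Finset.notMem_erase j J),
    ← Finset.sum_add_distrib]
  apply Finset.sum_eq_zero
  intro K hK
  have hjK : j ∉ K := fun h => Finset.notMem_erase j J (Finset.mem_powerset.mp hK h)
  rw [substOp_insert_of_not_mem hg hjL, Finset.card_insert_of_notMem hjK, pow_succ]
  funext x
  simp

/-- Additive recovery: under (P1), (P2), (P3), for an additive
function `f(x) = ∑_j g_j(x_j)` the first-order terms are the centered summands
`H_{{j}}(f) = g_j - E[g_j(X_j)]`, and `H_J(f) = 0` for `|J| ≥ 2`. -/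
theorem stmt14 [Fintype ι]
    (E : ((∀ i, X i) → ℝ) →ₗ[ℝ] ((∀ i, X i) → ℝ))
    (hEconst : ∀ g : (∀ i, X i) → ℝ, DependsOnCoords (∅ : Finset ι) (E g))
    (hEfix : ∀ c : ℝ, E (fun _ => c) = fun _ => c)
    (H : Finset ι → ((∀ i, X i) → ℝ) →ₗ[ℝ] ((∀ i, X i) → ℝ))
    (hV : ∀ (J : Finset ι) (g : (∀ i, X i) → ℝ), DependsOnCoords J (H J g))
    (hP1a : H ∅ = E)
    (hP1b : ∀ J : Finset ι, J.Nonempty → ∀ g : (∀ i, X i) → ℝ, E (H J g) = 0)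
    (hP2 : ∀ (J : Finset ι) (g : (∀ i, X i) → ℝ), PDiffZero J g → H J g = 0)
    (hP3 : ∀ (J : Finset ι) (g : (∀ i, X i) → ℝ), DependsOnCoords J g →
      ∑ J' ∈ J.powerset, H J' g = g)
    (G : ∀ i, X i → ℝ)
    (f : (∀ i, X i) → ℝ) (hf : f = fun x => ∑ j, G j (x j)) :
    (∀ j : ι, H {j} f = (fun x => G j (x j)) - E (fun x => G j (x j))) ∧
    (∀ J : Finset ι, 2 ≤ J.card → H J f = 0) := by
  have hdep : ∀ l : ι, DependsOnCoords {l} (fun x => G l (x l)) := by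
    intro l x y h
    simp [h l (Finset.mem_singleton_self l)]
  have hfs : f = ∑ l, (fun x => G l (x l)) := by
    rw [hf]; funext x; simp [Finset.sum_apply]
  have hzero : ∀ (J : Finset ι) (l j : ι), j ∈ J → j ≠ l →
      H J (fun x => G l (x l)) = 0 := fun J l j hjJ hjl =>
    hP2 J _ (pdiffZero_of_indep (hdep l) hjJ (Finset.notMem_singleton.mpr hjl))
  constructor
  · intro j
    rw [hfs, map_sum, Finset.sum_eq_single j]
    · have h3 := hP3 {j} _ (hdep j)
      rw [show ({j} : Finset ι) = insert j ∅ from rfl,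
        Finset.sum_powerset_insert (Finset.notMem_empty j)] at h3
      simp only [Finset.powerset_empty, Finset.sum_singleton, insert_empty_eq,
        hP1a] at h3
      exact eq_sub_of_add_eq' h3
    · intro l _ hlj
      exact hzero {j} l j (Finset.mem_singleton_self j) (Ne.symm hlj)
    · intro h; exact absurd (Finset.mem_univ j) h
  · intro J hJ
    rw [hfs, map_sum]
    apply Finset.sum_eq_zero
    intro l _
    obtain ⟨j, hjJ, hjl⟩ : ∃ j ∈ J, j ≠ l := by
      by_contra h
      push_neg at h
      have hsub : J ⊆ {l} := fun x hx => Finset.mem_singleton.mpr (h x hx)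
      have := Finset.card_le_card hsub
      simp at this
      omega
    exact hzero J l j hjJ hjl
end

section
/- The PD-based naive decomposition violates Idempotence and Operational Orthogonality: let f(x_1,x_2,x_3) = x_1 x_2 x_3 and X_1 = U, X_2 = U + V, X_3 = W with U, V, W independent, mean 0, variance 1. Then the naive PD terms satisfy f*_{{1,2}}(x_1,x_2) = 0 and f*_{{1,3}}(x_1,x_3) = f*_{{2,3}}(x_2,x_3) = −x_3; consequently H*_{{1,3},PD}(f*_{{1,3}}) = 0 ≠ f*_{{1,3}} (violating P4) and H*_{3,PD}(f*_{{1,3}}) = −x_3 ≠ 0 (violating P5). -/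
open MeasureTheory

variable {Ω : Type*} [MeasureSpace Ω]

/-- Full expectation `E[g(X₁,X₂,X₃)]` for the random vector
`(X₁, X₂, X₃) = (U, U+V, W)`. -/
noncomputable def EX3 (U V W : Ω → ℝ) (g : ℝ → ℝ → ℝ → ℝ) : ℝ :=
  ∫ ω, g (U ω) (U ω + V ω) (W ω)

/-- Partial dependence `PD_{1}` etc. : expectation over the remaining coordinates. -/
noncomputable def Ec1 (U V W : Ω → ℝ) (g : ℝ → ℝ → ℝ → ℝ) (x1 : ℝ) : ℝ :=
  ∫ ω, g x1 (U ω + V ω) (W ω)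

noncomputable def Ec2 (U V W : Ω → ℝ) (g : ℝ → ℝ → ℝ → ℝ) (x2 : ℝ) : ℝ :=
  ∫ ω, g (U ω) x2 (W ω)

noncomputable def Ec3 (U V W : Ω → ℝ) (g : ℝ → ℝ → ℝ → ℝ) (x3 : ℝ) : ℝ :=
  ∫ ω, g (U ω) (U ω + V ω) x3

noncomputable def Ec12 (U V W : Ω → ℝ) (g : ℝ → ℝ → ℝ → ℝ) (x1 x2 : ℝ) : ℝ :=
  ∫ ω, g x1 x2 (W ω)

noncomputable def Ec13 (U V W : Ω → ℝ) (g : ℝ → ℝ → ℝ → ℝ) (x1 x3 : ℝ) : ℝ :=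
  ∫ ω, g x1 (U ω + V ω) x3

noncomputable def Ec23 (U V W : Ω → ℝ) (g : ℝ → ℝ → ℝ → ℝ) (x2 x3 : ℝ) : ℝ :=
  ∫ ω, g (U ω) x2 x3

/-- The PD-based naive operators `H*_{J,PD} = (I-E)∘(E_{X_{∖J}} - ∑_{J'⊂J} H*_{J',PD})`
for `J = {1}`, `{3}`, `{1,3}`, applied to a prediction function `g`. -/
noncomputable def Hn1 (U V W : Ω → ℝ) (g : ℝ → ℝ → ℝ → ℝ) (x1 : ℝ) : ℝ :=
  Ec1 U V W g x1 - ∫ ω, Ec1 U V W g (U ω)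

noncomputable def Hn3 (U V W : Ω → ℝ) (g : ℝ → ℝ → ℝ → ℝ) (x3 : ℝ) : ℝ :=
  Ec3 U V W g x3 - ∫ ω, Ec3 U V W g (W ω)

noncomputable def Hn13inner (U V W : Ω → ℝ) (g : ℝ → ℝ → ℝ → ℝ) (x1 x3 : ℝ) : ℝ :=
  Ec13 U V W g x1 x3 - EX3 U V W g - Hn1 U V W g x1 - Hn3 U V W g x3

noncomputable def Hn13 (U V W : Ω → ℝ) (g : ℝ → ℝ → ℝ → ℝ) (x1 x3 : ℝ) : ℝ :=
  Hn13inner U V W g x1 x3 - ∫ ω, Hn13inner U V W g (U ω) (W ω)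

/-- The prediction function `f(x₁,x₂,x₃) = x₁ x₂ x₃`. -/
noncomputable def fEx : ℝ → ℝ → ℝ → ℝ := fun x1 x2 x3 => x1 * x2 * x3

/-- The PD-based naive decomposition terms
`f*_J := PD_J - ∑_{∅≠J'⊂J} f*_{J'} - E[PD_J(X_J)]` of `fEx`. -/
noncomputable def fs1 (U V W : Ω → ℝ) (x1 : ℝ) : ℝ :=
  Ec1 U V W fEx x1 - ∫ ω, Ec1 U V W fEx (U ω)

noncomputable def fs2 (U V W : Ω → ℝ) (x2 : ℝ) : ℝ :=
  Ec2 U V W fEx x2 - ∫ ω, Ec2 U V W fEx (U ω + V ω)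

noncomputable def fs3 (U V W : Ω → ℝ) (x3 : ℝ) : ℝ :=
  Ec3 U V W fEx x3 - ∫ ω, Ec3 U V W fEx (W ω)

noncomputable def fs12 (U V W : Ω → ℝ) (x1 x2 : ℝ) : ℝ :=
  Ec12 U V W fEx x1 x2 - fs1 U V W x1 - fs2 U V W x2 -
    ∫ ω, Ec12 U V W fEx (U ω) (U ω + V ω)

noncomputable def fs13 (U V W : Ω → ℝ) (x1 x3 : ℝ) : ℝ :=
  Ec13 U V W fEx x1 x3 - fs1 U V W x1 - fs3 U V W x3 -
    ∫ ω, Ec13 U V W fEx (U ω) (W ω)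

noncomputable def fs23 (U V W : Ω → ℝ) (x2 x3 : ℝ) : ℝ :=
  Ec23 U V W fEx x2 x3 - fs2 U V W x2 - fs3 U V W x3 -
    ∫ ω, Ec23 U V W fEx (U ω + V ω) (W ω)

/-- for `f(x₁,x₂,x₃) = x₁x₂x₃` with `X₁ = U`, `X₂ = U+V`, `X₃ = W`
(`U,V,W` independent, mean 0, variance 1), the naive PD terms satisfy
`f*_{12} = 0`, `f*_{13}(x₁,x₃) = f*_{23}(x₂,x₃) = -x₃`; applying `H*_{{1,3},PD}`
to `f*_{13}` gives `0 ≠ f*_{13}` (violating P4) and applying `H*_{3,PD}` gives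
`-x₃ ≠ 0` (violating P5). -/
theorem stmt16 [IsProbabilityMeasure (volume : Measure Ω)]
    (U V W : Ω → ℝ)
    (hmU : Measurable U) (hmV : Measurable V) (hmW : Measurable W)
    (hindep : ProbabilityTheory.iIndepFun
      ![U, V, W] volume)
    (hU1 : Integrable U) (hV1 : Integrable V) (hW1 : Integrable W)
    (hU2 : Integrable (fun ω => U ω * U ω))
    (hV2 : Integrable (fun ω => V ω * V ω))
    (hW2 : Integrable (fun ω => W ω * W ω))
    (hEU : ∫ ω, U ω = 0) (hEV : ∫ ω, V ω = 0) (hEW : ∫ ω, W ω = 0)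
    (hVarU : ∫ ω, U ω * U ω = 1) (hVarV : ∫ ω, V ω * V ω = 1)
    (hVarW : ∫ ω, W ω * W ω = 1) :
    (∀ x1 x2 : ℝ, fs12 U V W x1 x2 = 0) ∧
    (∀ x1 x3 : ℝ, fs13 U V W x1 x3 = -x3) ∧
    (∀ x2 x3 : ℝ, fs23 U V W x2 x3 = -x3) ∧
    (∀ x1 x3 : ℝ, Hn13 U V W (fun a _ c => fs13 U V W a c) x1 x3 = 0) ∧
    ((fun x1 x3 => Hn13 U V W (fun a _ c => fs13 U V W a c) x1 x3) ≠
      fun x1 x3 => fs13 U V W x1 x3) ∧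
    (∀ x3 : ℝ, Hn3 U V W (fun a _ c => fs13 U V W a c) x3 = -x3) ∧
    ((fun x3 => Hn3 U V W (fun a _ c => fs13 U V W a c) x3) ≠ 0) := by
    classical
  have hm : ∀ i, Measurable (![U, V, W] i) := by
    intro i; fin_cases i
    · exact hmU
    · exact hmV
    · exact hmW
  have hUV : ProbabilityTheory.IndepFun U V volume := hindep.indepFun (by decide : (0 : Fin 3) ≠ 1)
  have hUW : ProbabilityTheory.IndepFun U W volume := hindep.indepFun (by decide : (0 : Fin 3) ≠ 2)
  have hpair : ProbabilityTheory.IndepFun (fun ω => (U ω, V ω)) W volume :=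
    hindep.indepFun_prodMk hm 0 1 2 (by decide) (by decide)
  have hUVW : ProbabilityTheory.IndepFun (fun ω => U ω + V ω) W volume :=
    hpair.comp (measurable_fst.add measurable_snd) measurable_id
  have hU2W : ProbabilityTheory.IndepFun (fun ω => U ω * (U ω + V ω)) W volume :=
    hpair.comp (measurable_fst.mul (measurable_fst.add measurable_snd)) measurable_id
  have eUVsum : ∫ ω, (U ω + V ω) = 0 := by
    rw [integral_add hU1 hV1, hEU, hEV]; ring
  have eUVsumW : ∫ ω, (U ω + V ω) * W ω = 0 := by
    have := hUVW.integral_mul_eq_mul_integral ((hmU.add hmV).aestronglyMeasurable) hmW.aestronglyMeasurable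
    simpa [eUVsum] using this
  have eUW : ∫ ω, U ω * W ω = 0 := by
    have := hUW.integral_mul_eq_mul_integral hmU.aestronglyMeasurable hmW.aestronglyMeasurable
    simpa [hEU] using this
  have eUVmul : ∫ ω, U ω * V ω = 0 := by
    have := hUV.integral_mul_eq_mul_integral hmU.aestronglyMeasurable hmV.aestronglyMeasurable
    simpa [hEU] using this
  have hiUV : Integrable (fun ω => U ω * V ω) := by
    have := hUV.integrable_mul hU1 hV1
    exact this
  have eUUV : ∫ ω, U ω * (U ω + V ω) = 1 := by
    have h : ∫ ω, U ω * (U ω + V ω) = ∫ ω, (U ω * U ω + U ω * V ω) := by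
      congr 1; funext ω; ring
    rw [h, integral_add hU2 hiUV, hVarU, eUVmul]; ring
  have eFull : ∫ ω, U ω * (U ω + V ω) * W ω = 0 := by
    have := hU2W.integral_mul_eq_mul_integral ((hmU.mul (hmU.add hmV)).aestronglyMeasurable)
      hmW.aestronglyMeasurable
    simpa [hEW] using this
  have hEc1 : ∀ x1 : ℝ, Ec1 U V W fEx x1 = 0 := by
    intro x1
    have h : Ec1 U V W fEx x1 = ∫ ω, x1 * ((U ω + V ω) * W ω) := by
      unfold Ec1 fEx; congr 1; funext ω; ring
    rw [h, integral_const_mul, eUVsumW, mul_zero]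
  have hEc2 : ∀ x2 : ℝ, Ec2 U V W fEx x2 = 0 := by
    intro x2
    have h : Ec2 U V W fEx x2 = ∫ ω, x2 * (U ω * W ω) := by
      unfold Ec2 fEx; congr 1; funext ω; ring
    rw [h, integral_const_mul, eUW, mul_zero]
  have hEc3 : ∀ x3 : ℝ, Ec3 U V W fEx x3 = x3 := by
    intro x3
    have h : Ec3 U V W fEx x3 = ∫ ω, x3 * (U ω * (U ω + V ω)) := by
      unfold Ec3 fEx; congr 1; funext ω; ring
    rw [h, integral_const_mul, eUUV, mul_one]
  have hEc12 : ∀ x1 x2 : ℝ, Ec12 U V W fEx x1 x2 = 0 := by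
    intro x1 x2
    have h : Ec12 U V W fEx x1 x2 = ∫ ω, (x1 * x2) * W ω := by
      unfold Ec12 fEx; congr 1
    rw [h, integral_const_mul, hEW, mul_zero]
  have hEc13 : ∀ x1 x3 : ℝ, Ec13 U V W fEx x1 x3 = 0 := by
    intro x1 x3
    have h : Ec13 U V W fEx x1 x3 = ∫ ω, (x1 * x3) * (U ω + V ω) := by
      unfold Ec13 fEx; congr 1; funext ω; ring
    rw [h, integral_const_mul, eUVsum, mul_zero]
  have hEc23 : ∀ x2 x3 : ℝ, Ec23 U V W fEx x2 x3 = 0 := by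
    intro x2 x3
    have h : Ec23 U V W fEx x2 x3 = ∫ ω, (x2 * x3) * U ω := by
      unfold Ec23 fEx; congr 1; funext ω; ring
    rw [h, integral_const_mul, hEU, mul_zero]
  have hfs1 : ∀ x1 : ℝ, fs1 U V W x1 = 0 := by
    intro x1; unfold fs1; simp [hEc1]
  have hfs2 : ∀ x2 : ℝ, fs2 U V W x2 = 0 := by
    intro x2; unfold fs2; simp [hEc2]
  have hfs3 : ∀ x3 : ℝ, fs3 U V W x3 = x3 := by
    intro x3; unfold fs3; simp [hEc3, hEW]
  have hfs12 : ∀ x1 x2 : ℝ, fs12 U V W x1 x2 = 0 := by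
    intro x1 x2; unfold fs12; simp [hEc12, hfs1, hfs2]
  have hfs13 : ∀ x1 x3 : ℝ, fs13 U V W x1 x3 = -x3 := by
    intro x1 x3; unfold fs13; rw [hEc13, hfs1, hfs3]
    simp [hEc13]
  have hfs23 : ∀ x2 x3 : ℝ, fs23 U V W x2 x3 = -x3 := by
    intro x2 x3; unfold fs23; rw [hEc23, hfs2, hfs3]
    simp [hEc23]
  have hg : (fun a (_ : ℝ) c => fs13 U V W a c) = fun _ _ c => -c := by
    funext a b c; exact hfs13 a c
  have hEc1g : ∀ x1 : ℝ, Ec1 U V W (fun _ _ c => -c : ℝ → ℝ → ℝ → ℝ) x1 = 0 := by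
    intro x1; unfold Ec1
    simp [integral_neg, hEW]
  have hEc3g : ∀ x3 : ℝ, Ec3 U V W (fun _ _ c => -c : ℝ → ℝ → ℝ → ℝ) x3 = -x3 := by
    intro x3; unfold Ec3; simp
  have hEc13g : ∀ x1 x3 : ℝ, Ec13 U V W (fun _ _ c => -c : ℝ → ℝ → ℝ → ℝ) x1 x3 = -x3 := by
    intro x1 x3; unfold Ec13; simp
  have hEX3g : EX3 U V W (fun _ _ c => -c : ℝ → ℝ → ℝ → ℝ) = 0 := by
    unfold EX3; simp [integral_neg, hEW]
  have hHn1g : ∀ x1 : ℝ, Hn1 U V W (fun _ _ c => -c : ℝ → ℝ → ℝ → ℝ) x1 = 0 := by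
    intro x1; unfold Hn1; simp [hEc1g]
  have hHn3g : ∀ x3 : ℝ, Hn3 U V W (fun _ _ c => -c : ℝ → ℝ → ℝ → ℝ) x3 = -x3 := by
    intro x3; unfold Hn3; simp [hEc3g, integral_neg, hEW]
  have hInner : ∀ x1 x3 : ℝ, Hn13inner U V W (fun _ _ c => -c : ℝ → ℝ → ℝ → ℝ) x1 x3 = 0 := by
    intro x1 x3; unfold Hn13inner
    rw [hEc13g, hEX3g, hHn1g, hHn3g]; ring
  have hHn13g : ∀ x1 x3 : ℝ, Hn13 U V W (fun _ _ c => -c : ℝ → ℝ → ℝ → ℝ) x1 x3 = 0 := by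
    intro x1 x3; unfold Hn13; simp [hInner]
  refine ⟨hfs12, hfs13, hfs23, ?_, ?_, ?_, ?_⟩
  · intro x1 x3; rw [hg]; exact hHn13g x1 x3
  · intro h
    have h1 := congrFun (congrFun h 0) 1
    rw [hg, hHn13g 0 1, hfs13 0 1] at h1
    norm_num at h1
  · intro x3; rw [hg]; exact hHn3g x3
  · intro h
    have h1 := congrFun h 1
    rw [hg, hHn3g 1] at h1
    norm_num at h1
end

section
/- The RP-based operators satisfy the hypotheses of the main theorem: defining L_{J,RP}(g) := g|_{x_{∖J} = Rep_{∖J}} (substituting fixed representative values into all coordinates outside J), the family {L_{J,RP}}_{∅≠J⊆D} satisfies (P2)*: ∂g/∂x_J = 0 ⇒ ∂(L_{J,RP}(g))/∂x_J = 0, and (P3)*: g ∈ V_J ⇒ L_{J,RP}(g) = g (hence ∂(L_{J,RP}(g) − g)/∂x_J = 0). Consequently the recursively defined H_{J,RP} := (I − Σ_{J'⊂J} H_{J',RP}) ∘ L_{J,RP} with H_{∅,RP} := E satisfy properties (P1)–(P5). -/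
open Finset MeasureTheory

variable {ι : Type*} [DecidableEq ι] {X : ι → Type*}

set_option linter.unusedSectionVars false

lemma substPt_empty (a x : ∀ i, X i) : substPt (∅ : Finset ι) a x = x := by
  funext i; simp [substPt]

lemma substPt_compl_comm [Fintype ι] {J K : Finset ι} (hK : K ⊆ J) (Rep a x : ∀ i, X i) :
    substPt Jᶜ Rep (substPt K a x) = substPt K a (substPt Jᶜ Rep x) := by
  funext i
  by_cases h1 : i ∈ K
  · have h2 : i ∈ J := hK h1
    simp [substPt, h1, h2]
  · by_cases h2 : i ∈ J <;> simp [substPt, h1, h2]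

lemma DependsOnCoords.mono {K J : Finset ι} {f : (∀ i, X i) → ℝ} (h : DependsOnCoords K f)
    (hKJ : K ⊆ J) : DependsOnCoords J f :=
  fun x y hxy => h x y fun i hi => hxy i (hKJ hi)

lemma dependsOn_substOp_compl [Fintype ι] (J : Finset ι) (Rep : ∀ i, X i)
    (g : (∀ i, X i) → ℝ) : DependsOnCoords J (substOp Jᶜ Rep g) := by
  intro x y hxy
  simp only [substOp]
  congr 1
  funext i
  by_cases h : i ∈ J
  · simp [substPt, h, hxy i h]
  · simp [substPt, h]

lemma DependsOnCoords.substOp_sdiff {K : Finset ι} {f : (∀ i, X i) → ℝ} (h : DependsOnCoords K f)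
    (K' : Finset ι) (a : ∀ i, X i) : DependsOnCoords (K \ K') (substOp K' a f) := by
  intro x y hxy
  apply h
  intro i hi
  by_cases h' : i ∈ K'
  · simp [substPt, h']
  · simp [substPt, h', hxy i (Finset.mem_sdiff.mpr ⟨hi, h'⟩)]

lemma substOp_compl_eq_self [Fintype ι] {J : Finset ι} {g : (∀ i, X i) → ℝ}
    (Rep : ∀ i, X i) (h : DependsOnCoords J g) : substOp Jᶜ Rep g = g := by
  funext x
  apply h
  intro i hi
  simp [substPt, hi]

lemma pdiffZero_substOp_compl [Fintype ι] {J : Finset ι} {g : (∀ i, X i) → ℝ}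
    (Rep : ∀ i, X i) (h : PDiffZero J g) : PDiffZero J (substOp Jᶜ Rep g) := by
  intro a
  funext x
  show pdiff J a (substOp Jᶜ Rep g) x = 0
  calc pdiff J a (substOp Jᶜ Rep g) x
      = ∑ K ∈ J.powerset, ((-1 : ℝ) ^ K.card) * g (substPt Jᶜ Rep (substPt K a x)) := by
        rw [pdiff_apply]; rfl
    _ = ∑ K ∈ J.powerset, ((-1 : ℝ) ^ K.card) * g (substPt K a (substPt Jᶜ Rep x)) :=
        Finset.sum_congr rfl fun K hK => by
          rw [substPt_compl_comm (Finset.mem_powerset.mp hK)]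
    _ = pdiff J a g (substPt Jᶜ Rep x) := (pdiff_apply _ _ _ _).symm
    _ = 0 := by rw [h a]; rfl

section HAux
variable [Fintype ι] (Rep : ∀ i, X i)
  (E : ((∀ i, X i) → ℝ) →ₗ[ℝ] ((∀ i, X i) → ℝ))
  (hEconst : ∀ g : (∀ i, X i) → ℝ, DependsOnCoords (∅ : Finset ι) (E g))
  (hEfix : ∀ c : ℝ, E (fun _ => c) = fun _ => c)
  (H : Finset ι → ((∀ i, X i) → ℝ) →ₗ[ℝ] ((∀ i, X i) → ℝ))
  (hH0 : H ∅ = E)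
  (hHrec : ∀ J : Finset ι, J.Nonempty → ∀ g : (∀ i, X i) → ℝ,
      H J g = substOp Jᶜ Rep g - ∑ J' ∈ J.powerset.erase J, H J' (substOp Jᶜ Rep g))

include Rep hEfix in
lemma E_fix_of_const (f : (∀ i, X i) → ℝ) (hf : DependsOnCoords ∅ f) : E f = f := by
  have hc : f = fun _ => f Rep := funext fun x => hf x Rep fun i hi => absurd hi (Finset.notMem_empty i)
  rw [hc, hEfix]

include Rep hEconst hEfix in
lemma E_E (g : (∀ i, X i) → ℝ) : E (E g) = E g :=
  E_fix_of_const Rep E hEfix (E g) (hEconst g)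

include hEfix hH0 hHrec in
lemma sum_H_eq (J : Finset ι) (g : (∀ i, X i) → ℝ) (hg : DependsOnCoords J g) :
    ∑ J' ∈ J.powerset, H J' g = g := by
  rcases J.eq_empty_or_nonempty with rfl | hJ
  · rw [Finset.powerset_empty, Finset.sum_singleton, hH0]
    exact E_fix_of_const Rep E hEfix g hg
  · have hL : substOp Jᶜ Rep g = g := substOp_compl_eq_self Rep hg
    have hr := hHrec J hJ g
    rw [hL] at hr
    rw [← Finset.add_sum_erase _ _ (Finset.mem_powerset_self J), hr, sub_add_cancel]

include hEfix hH0 hHrec in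
lemma H_substOp (J : Finset ι) (hJ : J.Nonempty) (g : (∀ i, X i) → ℝ) :
    H J (substOp Jᶜ Rep g) = H J g := by
  have hdep := dependsOn_substOp_compl J Rep g
  have h1 := sum_H_eq Rep E hEfix H hH0 hHrec J (substOp Jᶜ Rep g) hdep
  rw [← Finset.add_sum_erase _ _ (Finset.mem_powerset_self J)] at h1
  rw [hHrec J hJ g]
  exact eq_sub_of_add_eq h1

include hEconst hH0 hHrec in
lemma dependsOn_H (J : Finset ι) : ∀ g : (∀ i, X i) → ℝ, DependsOnCoords J (H J g) := by
  induction J using Finset.strongInduction with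
  | _ J IH =>
    intro g
    rcases J.eq_empty_or_nonempty with rfl | hJ
    · rw [hH0]; exact hEconst g
    · rw [hHrec J hJ g]
      intro x y hxy
      simp only [Pi.sub_apply, Finset.sum_apply]
      rw [dependsOn_substOp_compl J Rep g x y hxy]
      congr 1
      refine Finset.sum_congr rfl fun J' hJ' => ?_
      obtain ⟨hne, hsub⟩ := Finset.mem_erase.mp hJ'
      have hsub' := Finset.mem_powerset.mp hsub
      exact IH J' (lt_of_le_of_ne hsub' hne) _ x y fun i hi => hxy i (hsub' hi)

include hEfix hH0 hHrec in
lemma H_zero_of_dependsOn (J : Finset ι) : ∀ (K : Finset ι) (h : (∀ i, X i) → ℝ),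
    DependsOnCoords K h → ¬ J ⊆ K → H J h = 0 := by
  induction J using Finset.strongInduction with
  | _ J IH =>
    intro K h hdep hns
    rcases J.eq_empty_or_nonempty with rfl | hJ
    · exact absurd (Finset.empty_subset K) hns
    · have hdep' : DependsOnCoords (J ∩ K) (substOp Jᶜ Rep h) := by
        have h1 := hdep.substOp_sdiff Jᶜ Rep
        have he : K \ Jᶜ = J ∩ K := by ext i; simp [Finset.mem_sdiff, and_comm]
        rwa [he] at h1
      have hsum := sum_H_eq Rep E hEfix H hH0 hHrec (J ∩ K) (substOp Jᶜ Rep h) hdep'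
      have hsubset : (J ∩ K).powerset ⊆ J.powerset.erase J := by
        intro J' hJ'
        have hJ'sub : J' ⊆ J ∩ K := Finset.mem_powerset.mp hJ'
        obtain ⟨j, hjJ, hjK⟩ := Finset.not_subset.mp hns
        refine Finset.mem_erase.mpr ⟨?_, Finset.mem_powerset.mpr
          (hJ'sub.trans Finset.inter_subset_left)⟩
        rintro rfl
        exact hjK (Finset.mem_inter.mp (hJ'sub hjJ)).2
      have hzero : ∀ J' ∈ J.powerset.erase J, J' ∉ (J ∩ K).powerset →
          H J' (substOp Jᶜ Rep h) = 0 := by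
        intro J' hJ' hnot
        obtain ⟨hne, hsub⟩ := Finset.mem_erase.mp hJ'
        exact IH J' (lt_of_le_of_ne (Finset.mem_powerset.mp hsub) hne) (J ∩ K)
          (substOp Jᶜ Rep h) hdep' (fun hc => hnot (Finset.mem_powerset.mpr hc))
      rw [hHrec J hJ h, ← Finset.sum_subset hsubset hzero, hsum, sub_self]

include hEfix hH0 hHrec in
lemma H_zero_of_pdiffZero (J : Finset ι) (g : (∀ i, X i) → ℝ) (hg : PDiffZero J g) :
    H J g = 0 := by
  rcases J.eq_empty_or_nonempty with rfl | hJ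
  · have hg0 : g = 0 := by
      have h1 := hg Rep
      rwa [pdiff, Finset.powerset_empty, Finset.sum_singleton, Finset.card_empty,
        pow_zero, one_smul, substOp_empty] at h1
    rw [hg0, map_zero]
  · rw [← H_substOp Rep E hEfix H hH0 hHrec J hJ g]
    set h := substOp Jᶜ Rep g with hh
    have hph : PDiffZero J h := pdiffZero_substOp_compl Rep hg
    have hdep : DependsOnCoords J h := dependsOn_substOp_compl J Rep g
    have key := hph Rep
    rw [pdiff, ← Finset.add_sum_erase _ _ (Finset.empty_mem_powerset J),
      Finset.card_empty, pow_zero, one_smul, substOp_empty] at key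
    have hexp : h = -∑ K ∈ J.powerset.erase ∅, ((-1 : ℝ) ^ K.card) • substOp K Rep h :=
      eq_neg_of_add_eq_zero_left key
    rw [hexp, map_neg, map_sum]
    have hz : ∀ K ∈ J.powerset.erase ∅,
        H J (((-1 : ℝ) ^ K.card) • substOp K Rep h) = 0 := by
      intro K hK
      obtain ⟨hne, hsub⟩ := Finset.mem_erase.mp hK
      have hKsub := Finset.mem_powerset.mp hsub
      have hd : DependsOnCoords (J \ K) (substOp K Rep h) := hdep.substOp_sdiff K Rep
      have hns : ¬ J ⊆ J \ K := by
        obtain ⟨k, hk⟩ := Finset.nonempty_iff_ne_empty.mpr hne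
        intro hc
        exact (Finset.mem_sdiff.mp (hc (hKsub hk))).2 hk
      rw [_root_.map_smul, H_zero_of_dependsOn Rep E hEfix H hH0 hHrec J (J \ K) _ hd hns,
        smul_zero]
    rw [Finset.sum_eq_zero hz, neg_zero]

include Rep hEconst hEfix hH0 hHrec in
lemma E_H_zero (J : Finset ι) : J.Nonempty → ∀ g : (∀ i, X i) → ℝ, E (H J g) = 0 := by
  induction J using Finset.strongInduction with
  | _ J IH =>
    intro hJ g
    rw [hHrec J hJ g, map_sub, map_sum]
    have hmem : (∅ : Finset ι) ∈ J.powerset.erase J :=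
      Finset.mem_erase.mpr ⟨fun hc => hJ.ne_empty hc.symm, Finset.empty_mem_powerset J⟩
    have hsum : ∑ J' ∈ J.powerset.erase J, E (H J' (substOp Jᶜ Rep g))
        = E (H ∅ (substOp Jᶜ Rep g)) := by
      refine Finset.sum_eq_single_of_mem ∅ hmem fun J' hJ' hne => ?_
      obtain ⟨hneJ, hsub⟩ := Finset.mem_erase.mp hJ'
      exact IH J' (lt_of_le_of_ne (Finset.mem_powerset.mp hsub) hneJ)
        (Finset.nonempty_iff_ne_empty.mpr hne) _
    rw [hsum, hH0, E_E Rep E hEconst hEfix, sub_self]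

include Rep hEconst hEfix hH0 hHrec in
lemma H_orth (J : Finset ι) :
    (∀ K, K ≠ J → ∀ g : (∀ i, X i) → ℝ, H K (H J g) = 0) ∧
    (∀ g : (∀ i, X i) → ℝ, H J (H J g) = H J g) := by
  induction J using Finset.strongInduction with
  | _ J IH =>
    have hS : ∀ K, K ≠ J → ∀ g : (∀ i, X i) → ℝ, H K (H J g) = 0 := by
      intro K hKJ g
      by_cases hsub : K ⊆ J
      · have hKJ' : K ⊂ J := lt_of_le_of_ne hsub hKJ
        have hJne : J.Nonempty := by
          rcases J.eq_empty_or_nonempty with rfl | h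
          · exact absurd (Finset.subset_empty.mp hsub) hKJ
          · exact h
        rw [hHrec J hJne g, map_sub, map_sum]
        have hmemK : K ∈ J.powerset.erase J :=
          Finset.mem_erase.mpr ⟨hKJ, Finset.mem_powerset.mpr hsub⟩
        have hsingle : ∑ J' ∈ J.powerset.erase J, H K (H J' (substOp Jᶜ Rep g))
            = H K (H K (substOp Jᶜ Rep g)) := by
          refine Finset.sum_eq_single_of_mem K hmemK fun J' hJ' hne => ?_
          obtain ⟨hneJ, hsubJ⟩ := Finset.mem_erase.mp hJ'
          exact (IH J' (lt_of_le_of_ne (Finset.mem_powerset.mp hsubJ) hneJ)).1 K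
            (Ne.symm hne) _
        rw [hsingle, (IH K hKJ').2 _, sub_self]
      · exact H_zero_of_dependsOn Rep E hEfix H hH0 hHrec K J (H J g)
          (dependsOn_H Rep E hEconst H hH0 hHrec J g) hsub
    refine ⟨hS, fun g => ?_⟩
    have hsum := sum_H_eq Rep E hEfix H hH0 hHrec J (H J g)
      (dependsOn_H Rep E hEconst H hH0 hHrec J g)
    rw [← Finset.add_sum_erase _ _ (Finset.mem_powerset_self J),
      Finset.sum_eq_zero fun J' hJ' => hS J' (Finset.mem_erase.mp hJ').1 g,
      add_zero] at hsum
    exact hsum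

end HAux

/-- the RP-based operators `L_{J,RP}(g) := g|_{x_{∖J} = Rep_{∖J}}`
satisfy (P2)* and (P3)* (indeed `L_{J,RP}(g) = g` for `g ∈ V_J`), and hence the
recursively defined `H_{J,RP}` satisfy (P1)–(P5). -/
theorem stmt19 [Fintype ι]
    (Rep : ∀ i, X i)
    (E : ((∀ i, X i) → ℝ) →ₗ[ℝ] ((∀ i, X i) → ℝ))
    (hEconst : ∀ g : (∀ i, X i) → ℝ, DependsOnCoords (∅ : Finset ι) (E g))
    (hEfix : ∀ c : ℝ, E (fun _ => c) = fun _ => c)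
    (H : Finset ι → ((∀ i, X i) → ℝ) →ₗ[ℝ] ((∀ i, X i) → ℝ))
    (hH0 : H ∅ = E)
    (hHrec : ∀ J : Finset ι, J.Nonempty → ∀ g : (∀ i, X i) → ℝ,
      H J g = substOp Jᶜ Rep g - ∑ J' ∈ J.powerset.erase J, H J' (substOp Jᶜ Rep g)) :
    (∀ J : Finset ι, J.Nonempty → ∀ g : (∀ i, X i) → ℝ,
      PDiffZero J g → PDiffZero J (substOp Jᶜ Rep g)) ∧
    (∀ J : Finset ι, J.Nonempty → ∀ g : (∀ i, X i) → ℝ,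
      DependsOnCoords J g → substOp Jᶜ Rep g = g) ∧
    (H ∅ = E ∧
      ∀ J : Finset ι, J.Nonempty → ∀ g : (∀ i, X i) → ℝ, E (H J g) = 0) ∧
    (∀ (J : Finset ι) (g : (∀ i, X i) → ℝ), PDiffZero J g → H J g = 0) ∧
    (∀ (J : Finset ι) (g : (∀ i, X i) → ℝ), DependsOnCoords J g →
      ∑ J' ∈ J.powerset, H J' g = g) ∧
    (∀ (J : Finset ι) (g : (∀ i, X i) → ℝ), H J (H J g) = H J g) ∧
    (∀ (J' J : Finset ι), J' ≠ J → ∀ g : (∀ i, X i) → ℝ, H J' (H J g) = 0) := by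
  refine ⟨fun J _ g hg => pdiffZero_substOp_compl Rep hg,
    fun J _ g hg => substOp_compl_eq_self Rep hg,
    ⟨hH0, fun J hJ g => E_H_zero Rep E hEconst hEfix H hH0 hHrec J hJ g⟩,
    fun J g hg => H_zero_of_pdiffZero Rep E hEfix H hH0 hHrec J g hg,
    fun J g hg => sum_H_eq Rep E hEfix H hH0 hHrec J g hg,
    fun J g => (H_orth Rep E hEconst hEfix H hH0 hHrec J).2 g,
    fun J' J hne g => (H_orth Rep E hEconst hEfix H hH0 hHrec J).1 J' hne g⟩
end
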